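/- Fix n ≥ 2 and p ≥ 2 and let U = {x ∈ ℝⁿ : x_n > |x̲|^p}, where x̲ = (x₁,…,x_{n-1}). For w = (w̲, |w̲|^p) ∈ ∂U let H_w = {x ∈ ℝⁿ : x_n ≥ |w̲|^p + p|w̲|^{p-2}(w̲ · (x̲ - w̲))} be the tangent half-space at w. Then there exists a constant c = c(n,p) > 0 such that for all w, z ∈ ∂U with 0 < |w̲ - z̲| < |w̲|/2 one has δ_U((w+z)/2) ≥ c · δ_{H_w}((w+z)/2). -/

import Mathlib

open Real

/-- The projection of `x ∈ ℝ^{k+1}` onto its first `k` coordinates: `x̲ = (x₁,…,x_k)`. -/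
noncomputable def lowerProj (k : ℕ) (x : EuclideanSpace ℝ (Fin (k + 1))) :
    EuclideanSpace ℝ (Fin k) :=
  (WithLp.equiv 2 (Fin k → ℝ)).symm fun i => x i.castSucc

/-- The domain `U = {x ∈ ℝⁿ : x_n > |x̲|^p}` (here `n = k+1`). -/
noncomputable def paraDomain (k : ℕ) (p : ℝ) : Set (EuclideanSpace ℝ (Fin (k + 1))) :=
  {x | ‖lowerProj k x‖ ^ p < x (Fin.last k)}

/-- The tangent (supporting) closed half-space of `U` at the boundary point
`w = (w̲, |w̲|^p)`: `H_w = {x : x_n ≥ |w̲|^p + p|w̲|^{p-2}·(w̲·(x̲-w̲))}`. -/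
noncomputable def paraTangentHalf (k : ℕ) (p : ℝ) (w : EuclideanSpace ℝ (Fin (k + 1))) :
    Set (EuclideanSpace ℝ (Fin (k + 1))) :=
  {x | ‖lowerProj k w‖ ^ p +
      p * ‖lowerProj k w‖ ^ (p - 2) *
        (inner ℝ (lowerProj k w) (lowerProj k x - lowerProj k w) : ℝ) ≤ x (Fin.last k)}

/- ### Auxiliary one-dimensional `rpow` inequalities -/

lemma tangent_le_rpow {x y q : ℝ} (hx : 0 < x) (hy : 0 ≤ y) (hq : 1 ≤ q) :
    x ^ q + q * x ^ (q - 1) * (y - x) ≤ y ^ q := by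
  have hs : -1 ≤ y / x - 1 := by
    have : 0 ≤ y / x := div_nonneg hy hx.le
    linarith
  have hb := one_add_mul_self_le_rpow_one_add hs hq
  have h1 : (1 + (y / x - 1)) = y / x := by ring
  rw [h1] at hb
  have hxq : (0:ℝ) < x ^ q := rpow_pos_of_pos hx q
  have := mul_le_mul_of_nonneg_left hb hxq.le
  have hdiv : x ^ q * (y / x) ^ q = y ^ q := by
    rw [div_rpow hy hx.le, mul_div_cancel₀]
    exact (rpow_pos_of_pos hx q).ne'
  rw [hdiv] at this
  calc x ^ q + q * x ^ (q - 1) * (y - x)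
      = x ^ q * (1 + q * (y / x - 1)) := by
        rw [rpow_sub hx, rpow_one]
        field_simp
    _ ≤ y ^ q := this

lemma rpow_le_tangent {x y q : ℝ} (hx : 0 < x) (hy : 0 ≤ y) (hq0 : 0 ≤ q) (hq1 : q ≤ 1) :
    y ^ q ≤ x ^ q + q * x ^ (q - 1) * (y - x) := by
  have hs : -1 ≤ y / x - 1 := by
    have : 0 ≤ y / x := div_nonneg hy hx.le
    linarith
  have hb := rpow_one_add_le_one_add_mul_self hs hq0 hq1
  have h1 : (1 + (y / x - 1)) = y / x := by ring
  rw [h1] at hb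
  have hxq : (0:ℝ) < x ^ q := rpow_pos_of_pos hx q
  have := mul_le_mul_of_nonneg_left hb hxq.le
  have hdiv : x ^ q * (y / x) ^ q = y ^ q := by
    rw [div_rpow hy hx.le, mul_div_cancel₀]
    exact (rpow_pos_of_pos hx q).ne'
  rw [hdiv] at this
  calc y ^ q ≤ x ^ q * (1 + q * (y / x - 1)) := this
    _ = x ^ q + q * x ^ (q - 1) * (y - x) := by
        rw [rpow_sub hx, rpow_one]
        field_simp

lemma midpoint_rpow_le {x y q : ℝ} (hx : 0 ≤ x) (hy : 0 ≤ y) (hxy : 0 < x + y) (hq : 1 ≤ q) :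
    ((x + y) / 2) ^ q ≤ (x ^ q + y ^ q) / 2 := by
  have h0 : (0:ℝ) < (x + y) / 2 := by linarith
  have h1 := tangent_le_rpow h0 hx hq
  have h2 := tangent_le_rpow h0 hy hq
  nlinarith [h1, h2]

lemma rpow_gamma_diff_bound {R S γ : ℝ} (hR : 0 < R) (hS1 : R / 4 ≤ S) (hS2 : S ≤ 9 * R / 4)
    (hγ : 0 ≤ γ) : |S ^ γ - R ^ γ| ≤ γ * 4 ^ (γ + 1) * R ^ (γ - 1) * |S - R| := by
  have hS0 : 0 < S := lt_of_lt_of_le (by linarith) hS1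
  have hRγ1 : (0:ℝ) < R ^ (γ - 1) := rpow_pos_of_pos hR _
  have h4big : (1:ℝ) ≤ 4 ^ (γ + 1) := by
    rw [show (1:ℝ) = 4 ^ (0:ℝ) by simp]
    exact rpow_le_rpow_of_exponent_le (by norm_num) (by linarith)
  rcases le_total γ 1 with hγ1 | hγ1
  · rcases le_total S R with hSR | hSR
    · have h1 := rpow_le_tangent hS0 hR.le hγ hγ1
      have h2 : S ^ (γ - 1) ≤ (R / 4) ^ (γ - 1) :=
        rpow_le_rpow_of_nonpos (by linarith) hS1 (by linarith)
      have h3 : (R / 4) ^ (γ - 1) = R ^ (γ - 1) / (4:ℝ) ^ (γ - 1) :=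
        div_rpow hR.le (by norm_num : (0:ℝ) ≤ 4) (γ - 1)
      have h4 : (4:ℝ) ^ (γ - 1) * (4:ℝ) ^ (1 - γ) = 1 := by
        rw [← rpow_add (by norm_num : (0:ℝ) < 4)]; norm_num
      have h5 : (4:ℝ) ^ (1 - γ) ≤ 4 ^ (γ + 1) :=
        rpow_le_rpow_of_exponent_le (by norm_num) (by linarith)
      have h6 : (0:ℝ) < 4 ^ (γ - 1) := rpow_pos_of_pos (by norm_num) _
      have h7 : (R/4) ^ (γ-1) = R ^ (γ-1) * (4:ℝ) ^ (1-γ) := by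
        rw [h3, div_eq_iff h6.ne', mul_assoc, mul_comm ((4:ℝ)^(1-γ)), h4, mul_one]
      rw [abs_of_nonpos (by nlinarith [rpow_le_rpow hS0.le hSR hγ] : S ^ γ - R ^ γ ≤ 0),
        abs_of_nonpos (by linarith : S - R ≤ 0)]
      rw [h7] at h2
      nlinarith [mul_le_mul_of_nonneg_left h2 (mul_nonneg hγ (by linarith : (0:ℝ) ≤ R - S)),
        mul_le_mul_of_nonneg_left h5 (mul_nonneg (mul_nonneg hγ (by linarith : (0:ℝ) ≤ R - S)) hRγ1.le)]
    · have h1 := rpow_le_tangent hR hS0.le hγ hγ1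
      rw [abs_of_nonneg (by nlinarith [rpow_le_rpow hR.le hSR hγ] : 0 ≤ S ^ γ - R ^ γ),
        abs_of_nonneg (by linarith : 0 ≤ S - R)]
      nlinarith [mul_le_mul_of_nonneg_left h4big
        (mul_nonneg (mul_nonneg hγ (by linarith : (0:ℝ) ≤ S - R)) hRγ1.le)]
  · rcases le_total S R with hSR | hSR
    · have h1 := tangent_le_rpow hR hS0.le hγ1
      rw [abs_of_nonpos (by nlinarith [rpow_le_rpow hS0.le hSR hγ] : S ^ γ - R ^ γ ≤ 0),
        abs_of_nonpos (by linarith : S - R ≤ 0)]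
      nlinarith [mul_le_mul_of_nonneg_left h4big
        (mul_nonneg (mul_nonneg (by linarith : (0:ℝ) ≤ γ) (by linarith : (0:ℝ) ≤ R - S)) hRγ1.le)]
    · have h1 := tangent_le_rpow hS0 hR.le hγ1
      have h2 : S ^ (γ - 1) ≤ (9 * R / 4) ^ (γ - 1) :=
        rpow_le_rpow hS0.le hS2 (by linarith)
      have h3 : (9 * R / 4) ^ (γ - 1) = (9/4 : ℝ) ^ (γ - 1) * R ^ (γ - 1) := by
        rw [← mul_rpow (by norm_num) hR.le]; ring_nf
      have h5 : ((9:ℝ)/4) ^ (γ - 1) ≤ 4 ^ (γ + 1) := by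
        calc ((9:ℝ)/4) ^ (γ - 1) ≤ 4 ^ (γ - 1) :=
              rpow_le_rpow (by norm_num) (by norm_num) (by linarith)
          _ ≤ 4 ^ (γ + 1) := rpow_le_rpow_of_exponent_le (by norm_num) (by linarith)
      have h6 : S ^ (γ - 1) ≤ 4 ^ (γ + 1) * R ^ (γ - 1) := by
        refine h2.trans ?_
        rw [h3]
        exact mul_le_mul_of_nonneg_right h5 hRγ1.le
      rw [abs_of_nonneg (by nlinarith [rpow_le_rpow hR.le hSR (by linarith : (0:ℝ) ≤ γ)] :
            0 ≤ S ^ γ - R ^ γ),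
        abs_of_nonneg (by linarith : 0 ≤ S - R)]
      nlinarith [mul_le_mul_of_nonneg_left h6
        (mul_nonneg (by linarith : (0:ℝ) ≤ γ) (by linarith : (0:ℝ) ≤ S - R))]

lemma bregman_upper {R S q : ℝ} (hR : 0 < R) (hS1 : R / 4 ≤ S) (hS2 : S ≤ 9 * R / 4)
    (hq : 1 ≤ q) :
    S ^ q - R ^ q - q * R ^ (q - 1) * (S - R) ≤
      q * ((q - 1) * 4 ^ q * R ^ (q - 2)) * (S - R) ^ 2 := by
  have hS0 : 0 < S := lt_of_lt_of_le (by linarith) hS1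
  have hγ := rpow_gamma_diff_bound hR hS1 hS2 (by linarith : (0:ℝ) ≤ q - 1)
  rw [show q - 1 + 1 = q by ring, show q - 1 - 1 = q - 2 by ring] at hγ
  have hT : S ^ q - R ^ q - q * R ^ (q - 1) * (S - R) ≤
      q * |S ^ (q-1) - R ^ (q-1)| * |S - R| := by
    have h1 := tangent_le_rpow hS0 hR.le hq
    have hq0 : (0:ℝ) ≤ q := by linarith
    rcases le_total S R with hSR | hSR
    · rw [abs_of_nonpos (by linarith : S - R ≤ 0)]
      have h2 : R ^ (q-1) - S ^ (q-1) ≤ |S ^ (q-1) - R ^ (q-1)| := by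
        rw [abs_sub_comm]; exact le_abs_self _
      have h3 := mul_le_mul_of_nonneg_left
        (mul_le_mul_of_nonneg_right h2 (show (0:ℝ) ≤ R - S by linarith)) hq0
      nlinarith [h1, h3]
    · rw [abs_of_nonneg (by linarith : 0 ≤ S - R)]
      have h2 : S ^ (q-1) - R ^ (q-1) ≤ |S ^ (q-1) - R ^ (q-1)| := le_abs_self _
      have h3 := mul_le_mul_of_nonneg_left
        (mul_le_mul_of_nonneg_right h2 (show (0:ℝ) ≤ S - R by linarith)) hq0
      nlinarith [h1, h3]
  refine hT.trans ?_
  have h2 : q * |S ^ (q-1) - R ^ (q-1)| * |S - R| ≤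
      q * ((q - 1) * 4 ^ q * R ^ (q - 2) * |S - R|) * |S - R| := by
    have h3 := mul_le_mul_of_nonneg_right hγ (abs_nonneg (S - R))
    have h4 := mul_le_mul_of_nonneg_left h3 (show (0:ℝ) ≤ q by linarith)
    nlinarith [h4]
  refine h2.trans ?_
  refine le_of_eq ?_
  calc q * ((q - 1) * 4 ^ q * R ^ (q - 2) * |S - R|) * |S - R|
      = q * ((q - 1) * 4 ^ q * R ^ (q - 2)) * (|S - R| * |S - R|) := by ring
    _ = q * ((q - 1) * 4 ^ q * R ^ (q - 2)) * (S - R) ^ 2 := by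
        rw [abs_mul_abs_self]; ring

/- ### Geometric infrastructure on `EuclideanSpace ℝ (Fin (k+1))` -/

noncomputable def mkPt (k : ℕ) (c : EuclideanSpace ℝ (Fin k)) (t : ℝ) :
    EuclideanSpace ℝ (Fin (k + 1)) :=
  (WithLp.equiv 2 (Fin (k+1) → ℝ)).symm (Fin.snoc c t)

lemma mkPt_last (k : ℕ) (c : EuclideanSpace ℝ (Fin k)) (t : ℝ) :
    mkPt k c t (Fin.last k) = t := by
  simp [mkPt]

lemma lowerProj_mkPt (k : ℕ) (c : EuclideanSpace ℝ (Fin k)) (t : ℝ) :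
    lowerProj k (mkPt k c t) = c := by
  ext i
  simp [mkPt, lowerProj]

lemma lowerProj_apply (k : ℕ) (x : EuclideanSpace ℝ (Fin (k+1))) (i : Fin k) :
    lowerProj k x i = x i.castSucc := rfl

lemma lowerProj_add (k : ℕ) (x y : EuclideanSpace ℝ (Fin (k+1))) :
    lowerProj k (x + y) = lowerProj k x + lowerProj k y := rfl

lemma lowerProj_sub (k : ℕ) (x y : EuclideanSpace ℝ (Fin (k+1))) :
    lowerProj k (x - y) = lowerProj k x - lowerProj k y := rfl

lemma lowerProj_smul (k : ℕ) (c : ℝ) (x : EuclideanSpace ℝ (Fin (k+1))) :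
    lowerProj k (c • x) = c • lowerProj k x := rfl

lemma norm_sq_split (k : ℕ) (x : EuclideanSpace ℝ (Fin (k+1))) :
    ‖x‖ ^ 2 = ‖lowerProj k x‖ ^ 2 + (x (Fin.last k)) ^ 2 := by
  have h1 : ‖x‖ ^ 2 = ∑ i, (x i) ^ 2 := by
    rw [EuclideanSpace.norm_eq, sq_sqrt (by positivity)]
    simp [Real.norm_eq_abs, sq_abs]
  have h2 : ‖lowerProj k x‖ ^ 2 = ∑ i : Fin k, (x i.castSucc) ^ 2 := by
    rw [EuclideanSpace.norm_eq, sq_sqrt (by positivity)]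
    simp [Real.norm_eq_abs, sq_abs, lowerProj_apply]
  rw [h1, h2, Fin.sum_univ_castSucc]

lemma dist_split (k : ℕ) (x y : EuclideanSpace ℝ (Fin (k+1))) :
    dist x y = Real.sqrt (‖lowerProj k x - lowerProj k y‖ ^ 2
      + (x (Fin.last k) - y (Fin.last k)) ^ 2) := by
  rw [dist_eq_norm, ← lowerProj_sub]
  have := norm_sq_split k (x - y)
  rw [show (x - y) (Fin.last k) = x (Fin.last k) - y (Fin.last k) from rfl] at this
  rw [← this, sqrt_sq (norm_nonneg _)]

lemma lower_le_dist (k : ℕ) (x y : EuclideanSpace ℝ (Fin (k+1))) :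
    ‖lowerProj k x - lowerProj k y‖ ≤ dist x y := by
  rw [dist_split k]
  refine le_trans (le_of_eq (sqrt_sq (norm_nonneg _)).symm) (sqrt_le_sqrt (by nlinarith [sq_nonneg (x (Fin.last k) - y (Fin.last k))]))

lemma last_le_dist (k : ℕ) (x y : EuclideanSpace ℝ (Fin (k+1))) :
    |x (Fin.last k) - y (Fin.last k)| ≤ dist x y := by
  rw [dist_split k]
  refine le_trans (le_of_eq (sqrt_sq_eq_abs _).symm) (sqrt_le_sqrt (by nlinarith [sq_nonneg ‖lowerProj k x - lowerProj k y‖]))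

lemma le_infDist_of {α : Type*} [PseudoMetricSpace α] {s : Set α} {x : α} {b : ℝ}
    (hs : s.Nonempty) (h : ∀ y ∈ s, b ≤ dist x y) : b ≤ Metric.infDist x s := by
  by_contra hlt
  push_neg at hlt
  obtain ⟨y, hy, hd⟩ := (Metric.infDist_lt_iff hs).mp hlt
  exact absurd (h y hy) (not_le.mpr hd)

lemma pow_two_rpow {x : ℝ} (hx : 0 ≤ x) (q : ℝ) : (x^2) ^ q = x ^ (2*q) := by
  rw [← Real.rpow_natCast x 2, ← Real.rpow_mul hx]
  norm_num

/-- Fix `n = k+1 ≥ 2`, `p ≥ 2` and `U = {x ∈ ℝⁿ : x_n > |x̲|^p}`. There is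
`c = c(n,p) > 0` such that for all boundary points `w, z ∈ ∂U` with
`0 < |w̲ - z̲| < |w̲|/2`: `δ_U((w+z)/2) ≥ c·δ_{H_w}((w+z)/2)`. -/
theorem stmt13 (k : ℕ) (hk : 1 ≤ k) (p : ℝ) (hp : 2 ≤ p) :
    ∃ c : ℝ, 0 < c ∧
      ∀ w z : EuclideanSpace ℝ (Fin (k + 1)),
        w (Fin.last k) = ‖lowerProj k w‖ ^ p →
        z (Fin.last k) = ‖lowerProj k z‖ ^ p →
        0 < ‖lowerProj k w - lowerProj k z‖ →
        ‖lowerProj k w - lowerProj k z‖ < ‖lowerProj k w‖ / 2 →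
        c * Metric.infDist ((2 : ℝ)⁻¹ • (w + z)) (paraTangentHalf k p w)ᶜ ≤
          Metric.infDist ((2 : ℝ)⁻¹ • (w + z)) (paraDomain k p)ᶜ := by
  have hp0 : 0 < p := by linarith
  set K : ℝ := 7 * p ^ 2 * (4:ℝ) ^ p + p with hKdef
  set lam : ℝ := (2:ℝ) ^ (p - 2) with hlamdef
  set mu : ℝ := (4:ℝ) ^ (p - 1) with hmudef
  have hKpos : 0 < K := by positivity
  have hlampos : 0 < lam := rpow_pos_of_pos (by norm_num) _
  have hmupos : 0 < mu := rpow_pos_of_pos (by norm_num) _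
  have hmu1 : 1 ≤ mu := by
    rw [hmudef, show (1:ℝ) = 4 ^ (0:ℝ) by simp]
    exact rpow_le_rpow_of_exponent_le (by norm_num) (by linarith)
  refine ⟨min (4*p/K) (p/(16 * lam * mu * K)), lt_min (by positivity) (by positivity), ?_⟩
  intro w z hw hz hd0 hdu
  clear_value K lam mu
  set a := lowerProj k w with hadef
  set b := lowerProj k z with hbdef
  set u := ‖a‖ with hudef
  set v := ‖b‖ with hvdef
  set d := ‖a - b‖ with hddef
  have hu : 0 < u := by linarith only [hd0, hdu]
  have hvu : |v - u| ≤ d := by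
    rw [hudef, hvdef, hddef, abs_sub_comm]
    exact abs_norm_sub_norm_le a b
  have hvu' := abs_le.mp hvu
  have hv1 : u/2 < v := by
    obtain ⟨h1, h2⟩ := hvu'; linarith only [h1, hdu]
  have hv2 : v < 3*u/2 := by
    obtain ⟨h1, h2⟩ := hvu'; linarith only [h2, hdu]
  have hv0 : 0 < v := by linarith only [hv1, hu]
  set m := (2:ℝ)⁻¹ • (w + z) with hmdef
  have hmlow : lowerProj k m = (2:ℝ)⁻¹ • (a + b) := by
    rw [hmdef, lowerProj_smul, lowerProj_add, hadef, hbdef]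
  have hmlast0 : m (Fin.last k) = (2:ℝ)⁻¹ * (w (Fin.last k) + z (Fin.last k)) := rfl
  have hmlast : m (Fin.last k) = (u ^ p + v ^ p) / 2 := by
    rw [hmlast0, hw, hz]; ring
  clear_value m
  set M := ‖lowerProj k m‖ with hMdef
  have h2M : ‖a + b‖ = 2 * M := by
    rw [hMdef, hmlow, norm_smul, Real.norm_eq_abs,
      abs_of_pos (by norm_num : (0:ℝ) < 2⁻¹)]
    ring
  have hmab : lowerProj k m - a = (2:ℝ)⁻¹ • (b - a) := by
    rw [hmlow]; module
  have hMa : ‖lowerProj k m - a‖ = d / 2 := by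
    rw [hmab, norm_smul, Real.norm_eq_abs, abs_of_pos (by norm_num : (0:ℝ) < 2⁻¹),
      norm_sub_rev, ← hddef]
    ring
  have hM34 : 3*u/4 ≤ M := by
    have h2 := norm_sub_norm_le a (lowerProj k m)
    rw [norm_sub_rev, hMa, ← hudef, ← hMdef] at h2
    linarith only [h2, hdu, hd0]
  have hM54 : M ≤ 5*u/4 := by
    have h2 := norm_sub_norm_le (lowerProj k m) a
    rw [hMa, ← hudef, ← hMdef] at h2
    linarith only [h2, hdu, hd0]
  have hM0 : 0 < M := by linarith only [hM34, hu]
  have hpar := parallelogram_law_with_norm ℝ a b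
  rw [h2M, ← hudef, ← hvdef, ← hddef] at hpar
  have hnsub := norm_sub_sq_real a b
  rw [← hudef, ← hvdef, ← hddef] at hnsub
  have hab : (inner ℝ a b : ℝ) = (u^2 + v^2 - d^2)/2 := by linear_combination hnsub / 2
  have haa : (inner ℝ a a : ℝ) = u^2 := by rw [real_inner_self_eq_norm_sq, ← hudef]
  have hinm : (inner ℝ a (lowerProj k m - a) : ℝ) = (v^2 - u^2 - d^2)/4 := by
    rw [hmab, real_inner_smul_right, inner_sub_right, hab, haa]
    ring
  clear_value u v d M
  have hx0 : (u^2 + v^2)/2 = M^2 + d^2/4 := by linear_combination (-(1:ℝ)/4) * hpar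
  clear hpar hnsub hmlow hmab hMa h2M hmlast0 hvu hab
  have hq1 : (1:ℝ) ≤ p/2 := by linarith only [hp]
  have e_uq : ((u^2:ℝ)) ^ (p/2) = u ^ p := by
    rw [pow_two_rpow hu.le, show 2*(p/2) = p by ring]
  have e_vq : ((v^2:ℝ)) ^ (p/2) = v ^ p := by
    rw [pow_two_rpow hv0.le, show 2*(p/2) = p by ring]
  have e_Mq : ((M^2:ℝ)) ^ (p/2) = M ^ p := by
    rw [pow_two_rpow hM0.le, show 2*(p/2) = p by ring]
  have e_Mq1 : ((M^2:ℝ)) ^ (p/2 - 1) = M ^ (p - 2) := by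
    rw [pow_two_rpow hM0.le, show 2*(p/2 - 1) = p - 2 by ring]
  have e_uq1 : ((u^2:ℝ)) ^ (p/2 - 1) = u ^ (p - 2) := by
    rw [pow_two_rpow hu.le, show 2*(p/2 - 1) = p - 2 by ring]
  have e_uq2 : ((u^2:ℝ)) ^ (p/2 - 2) = u ^ (p - 4) := by
    rw [pow_two_rpow hu.le, show 2*(p/2 - 2) = p - 4 by ring]
  have e_two : u ^ ((2:ℕ):ℝ) = u^2 := rpow_natCast u 2
  have e_u2 : u^(p-4) * u^2 = u^(p-2) := by
    rw [← e_two, ← rpow_add hu]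
    congr 1
    push_cast
    ring
  have e_u1 : u ^ (p-2) * u = u ^ (p-1) := by
    rw [show p - 1 = (p-2) + 1 by ring, rpow_add hu, rpow_one]
  have e_Bu : u^(p-2) * u^2 = u^(p-1) * u := by
    rw [← e_u1]; ring
  have hA0 : (0:ℝ) < u ^ (p-2) := rpow_pos_of_pos hu _
  have hB0 : (0:ℝ) < u ^ (p-1) := rpow_pos_of_pos hu _
  have hd2pos : (0:ℝ) < d^2 := pow_pos hd0 2
  -- Step C : lower bound for the convexity gap G
  have hmidp : ((u^2 + v^2)/2) ^ (p/2) ≤ (u^p + v^p)/2 := by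
    have h := midpoint_rpow_le (sq_nonneg u) (sq_nonneg v) (by nlinarith only [hu]) hq1
    rwa [e_uq, e_vq] at h
  have htan := tangent_le_rpow (x := (M^2:ℝ)) (y := M^2 + d^2/4) (pow_pos hM0 2)
    (by nlinarith only [sq_nonneg M, sq_nonneg d]) hq1
  rw [show (M^2 + d^2/4) - M^2 = d^2/4 by ring, e_Mq, e_Mq1] at htan
  rw [hx0] at hmidp
  set G := (u^p + v^p)/2 - M^p with hGdef
  clear_value G
  have hGlow : M ^ p + (p/8) * M^(p-2) * d^2 ≤ (u^p+v^p)/2 := by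
    linarith only [htan, hmidp]
  have hMu2 : u ^ (p-2) / lam ≤ M ^ (p-2) := by
    have h1 : ((u/2:ℝ)) ^ (p-2) ≤ M ^ (p-2) :=
      rpow_le_rpow (by linarith only [hu]) (by linarith only [hM34, hu]) (by linarith only [hp])
    rwa [div_rpow hu.le (by norm_num : (0:ℝ) ≤ 2), ← hlamdef] at h1
  have hGlow2 : (p/8) * (u^(p-2)/lam) * d^2 ≤ G := by
    have h1 : (p/8) * (u^(p-2)/lam) * d^2 ≤ (p/8) * M^(p-2) * d^2 := by
      have := mul_le_mul_of_nonneg_right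
        (mul_le_mul_of_nonneg_left hMu2 (by linarith only [hp0] : (0:ℝ) ≤ p/8)) (sq_nonneg d)
      linarith only [this]
    rw [hGdef]
    linarith only [hGlow, h1]
  have hGpos : 0 < G :=
    lt_of_lt_of_le (mul_pos (mul_pos (by linarith only [hp0] : (0:ℝ) < p/8)
      (div_pos hA0 hlampos)) hd2pos) hGlow2
  set N := (v^p - u^p)/2 - (p/4) * u^(p-2) * (v^2-u^2) + (p/4) * u^(p-2) * d^2 with hNdef
  clear_value N
  -- Step D : upper bound for N
  have hRS1 : (u^2:ℝ)/4 ≤ v^2 := by nlinarith only [hv1, hu]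
  have hRS2 : (v^2:ℝ) ≤ 9 * u^2 / 4 := by nlinarith only [hv2, hv0]
  have hbreg := bregman_upper (R := (u^2:ℝ)) (S := (v^2:ℝ)) (pow_pos hu 2) hRS1 hRS2 hq1
  rw [e_uq, e_vq, e_uq1, e_uq2] at hbreg
  have hvu2 : ((v^2:ℝ) - u^2)^2 ≤ (25/4) * u^2 * d^2 := by
    have h1 : (v-u)^2 ≤ d^2 := by
      obtain ⟨ha1, ha2⟩ := hvu'; nlinarith only [ha1, ha2]
    have h2 : (v+u)^2 ≤ (5*u/2)^2 := by nlinarith only [hv2, hv0, hu]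
    calc ((v^2:ℝ) - u^2)^2 = (v-u)^2 * (v+u)^2 := by ring
      _ ≤ d^2 * ((5*u/2)^2) := mul_le_mul h1 h2 (sq_nonneg _) (sq_nonneg d)
      _ = (25/4) * u^2 * d^2 := by ring
  have hF4 : ((4:ℝ)) ^ (p/2) ≤ 4 ^ p :=
    rpow_le_rpow_of_exponent_le (by norm_num) (by linarith)
  have hF4' : (0:ℝ) < (4:ℝ) ^ (p/2) := rpow_pos_of_pos (by norm_num) _
  have hu4 : (0:ℝ) ≤ u ^ (p-4) := (rpow_pos_of_pos hu _).le
  have hT3 : v^p - u^p - (p/2) * u^(p-2) * (v^2-u^2) ≤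
      (p/2) * ((p/2-1) * (4:ℝ)^(p/2) * u^(p-4)) * ((25/4) * u^2 * d^2) := by
    refine hbreg.trans (mul_le_mul_of_nonneg_left hvu2 ?_)
    exact mul_nonneg (by linarith only [hp0])
      (mul_nonneg (mul_nonneg (by linarith only [hq1]) hF4'.le) hu4)
  have e5 : (p/2) * ((p/2-1) * (4:ℝ)^(p/2) * u^(p-4)) * ((25/4) * u^2 * d^2)
      = (25/4) * (p/2) * (p/2-1) * (4:ℝ)^(p/2) * (u^(p-4) * u^2) * d^2 := by ring
  rw [e5, e_u2] at hT3
  have hcoeff : (25/8) * (p/2) * (p/2-1) * (4:ℝ)^(p/2) + p/4 ≤ K := by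
    rw [hKdef]
    nlinarith only [hF4, hF4', hp, mul_le_mul_of_nonneg_left hF4 (sq_nonneg p),
      rpow_pos_of_pos (by norm_num : (0:ℝ) < 4) p]
  have hNupper : N ≤ K * u^(p-2) * d^2 := by
    have h1 : N ≤ ((25/8) * (p/2) * (p/2-1) * (4:ℝ)^(p/2) + p/4) * (u^(p-2) * d^2) := by
      rw [hNdef]
      linarith only [hT3]
    refine h1.trans ?_
    have := mul_le_mul_of_nonneg_right hcoeff (le_of_lt (mul_pos hA0 hd2pos))
    linarith only [this]
  have hN0 : 0 ≤ N := by
    have h1 := tangent_le_rpow (x := (u^2:ℝ)) (y := (v^2:ℝ)) (pow_pos hu 2)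
      (sq_nonneg v) hq1
    rw [e_uq, e_vq, e_uq1] at h1
    have h2 : (0:ℝ) ≤ (p/4) * u^(p-2) * d^2 :=
      mul_nonneg (mul_nonneg (by linarith only [hp0]) hA0.le) (sq_nonneg d)
    rw [hNdef]
    linarith only [h1, h2]
  -- Step A : upper bound for the halfspace distance
  set P := p * u^(p-1) with hPdef
  clear_value P
  have hPpos : 0 < P := by rw [hPdef]; exact mul_pos hp0 hB0
  set Q := Real.sqrt (1 + P^2) with hQdef
  have hQsq : Q^2 = 1 + P^2 := by rw [hQdef]; exact sq_sqrt (by positivity)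
  have hQ1 : 1 ≤ Q := by
    rw [hQdef]
    have h1 : Real.sqrt 1 ≤ Real.sqrt (1 + P^2) := sqrt_le_sqrt (by linarith only [sq_nonneg P])
    simpa using h1
  have hQP : P ≤ Q := by
    rw [hQdef]
    have h1 : Real.sqrt (P^2) ≤ Real.sqrt (1 + P^2) := sqrt_le_sqrt (by linarith only [])
    rwa [sqrt_sq hPpos.le] at h1
  clear_value Q
  have hQpos : 0 < Q := lt_of_lt_of_le one_pos hQ1
  have hHmain : Metric.infDist m (paraTangentHalf k p w)ᶜ * Q ≤ N := by
    refine le_of_forall_pos_le_add ?_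
    intro ε hε
    set s := (N + ε) / (1 + P^2) with hsdef
    have hspos : 0 < s := by
      rw [hsdef]
      exact div_pos (by linarith only [hN0, hε]) (by positivity)
    have hsP : s * (1 + P^2) = N + ε := by
      rw [hsdef]
      field_simp
    clear_value s
    set V : EuclideanSpace ℝ (Fin k) := (p * u^(p-2)) • a with hVdef
    have hVnorm : ‖V‖ = P := by
      rw [hVdef, norm_smul, Real.norm_eq_abs, abs_of_pos (mul_pos hp0 hA0), ← hudef,
        hPdef, mul_assoc, e_u1]
    have haV : (inner ℝ a V : ℝ) = p * u^(p-2) * u^2 := by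
      rw [hVdef, real_inner_smul_right, haa]
    clear_value V
    have e_uu : u^(p-2) * (u^(p-2) * u^2) = u^(p-1) * u^(p-1) := by
      rw [← e_two, ← rpow_add hu, ← rpow_add hu, ← rpow_add hu]
      ring_nf
    have hPsq : p * u^(p-2) * (p * u^(p-2) * u^2) = P^2 := by
      rw [hPdef]
      linear_combination p^2 * e_uu
    set y := mkPt k (lowerProj k m + s • V) (m (Fin.last k) - s) with hydef
    have hylow : lowerProj k y = lowerProj k m + s • V := by
      rw [hydef]; exact lowerProj_mkPt _ _ _
    have hylast : y (Fin.last k) = m (Fin.last k) - s := by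
      rw [hydef]; exact mkPt_last _ _ _
    clear_value y
    have hyc : y ∈ (paraTangentHalf k p w)ᶜ := by
      simp only [Set.mem_compl_iff, paraTangentHalf, Set.mem_setOf_eq, not_le]
      rw [hylast, hylow, ← hadef, ← hudef]
      have hinner : (inner ℝ a (lowerProj k m + s • V - a) : ℝ)
          = (v^2-u^2-d^2)/4 + s * (p*u^(p-2)*u^2) := by
        rw [show lowerProj k m + s • V - a = (lowerProj k m - a) + s • V by module,
          inner_add_right, real_inner_smul_right, hinm, haV]
      rw [hinner, hmlast]
      have hRHS : u^p + p*u^(p-2)*((v^2-u^2-d^2)/4 + s*(p*u^(p-2)*u^2))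
          = ((u^p+v^p)/2 - N) + s*P^2 := by
        rw [hNdef]
        linear_combination s * hPsq
      rw [hRHS]
      linarith only [hsP, hε]
    have hdisty : dist m y = s * Q := by
      rw [dist_split k m y, hylow, hylast]
      rw [show lowerProj k m - (lowerProj k m + s • V) = (-s) • V by module]
      rw [norm_smul, Real.norm_eq_abs, abs_neg, abs_of_pos hspos, hVnorm]
      rw [show m (Fin.last k) - (m (Fin.last k) - s) = s by ring]
      rw [show (s*P)^2 + s^2 = (s*Q)^2 by rw [mul_pow, mul_pow, hQsq]; ring]
      exact sqrt_sq (mul_nonneg hspos.le hQpos.le)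
    have hle := Metric.infDist_le_dist_of_mem (x := m) hyc
    rw [hdisty] at hle
    have h2 := mul_le_mul_of_nonneg_right hle hQpos.le
    calc Metric.infDist m (paraTangentHalf k p w)ᶜ * Q ≤ s * Q * Q := h2
      _ = s * (1+P^2) := by rw [← hQsq]; ring
      _ = N + ε := hsP
  -- Step B : lower bound for the domain distance
  have hden : (0:ℝ) < 2 * p * mu * u^(p-1) :=
    mul_pos (mul_pos (mul_pos two_pos hp0) hmupos) hB0
  set r := min u (G / (2 * p * mu * u^(p-1))) with hrdef
  have hr_u : r ≤ u := min_le_left _ _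
  have hrpos : 0 < r := lt_min hu (div_pos hGpos hden)
  have hr2 : r ≤ G / (2*p*mu*u^(p-1)) := min_le_right _ _
  clear_value r
  have hUnonempty : ((paraDomain k p)ᶜ : Set (EuclideanSpace ℝ (Fin (k+1)))).Nonempty := by
    refine ⟨0, ?_⟩
    simp only [Set.mem_compl_iff, paraDomain, Set.mem_setOf_eq, not_lt]
    have h00 : lowerProj k (0 : EuclideanSpace ℝ (Fin (k+1))) = 0 := rfl
    have h01 : (0 : EuclideanSpace ℝ (Fin (k+1))) (Fin.last k) = 0 := rfl
    rw [h00, h01, norm_zero, zero_rpow hp0.ne']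
  have hUmain : min r (G/2) ≤ Metric.infDist m (paraDomain k p)ᶜ := by
    refine le_infDist_of hUnonempty ?_
    intro y hy
    rw [Set.mem_compl_iff, paraDomain, Set.mem_setOf_eq, not_lt] at hy
    rcases le_total r ‖lowerProj k m - lowerProj k y‖ with hcase | hcase
    · exact le_trans (min_le_left _ _) (hcase.trans (lower_le_dist k m y))
    · refine le_trans (min_le_right _ _) ?_
      have h1 : ‖lowerProj k y‖ ≤ M + r := by
        have h2 := norm_sub_norm_le (lowerProj k y) (lowerProj k m)
        rw [norm_sub_rev, ← hMdef] at h2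
        linarith only [h2, hcase]
      have h3 : ‖lowerProj k y‖ ^ p ≤ (M + r) ^ p :=
        rpow_le_rpow (norm_nonneg _) h1 hp0.le
      have h4 := tangent_le_rpow (x := M + r) (y := M)
        (by linarith only [hM0, hrpos]) hM0.le (by linarith only [hp] : (1:ℝ) ≤ p)
      rw [show M - (M + r) = -r by ring] at h4
      have h5 : (M + r) ^ (p-1) ≤ mu * u^(p-1) := by
        have h6 : (M + r) ^ (p-1) ≤ (4*u) ^ (p-1) :=
          rpow_le_rpow (by linarith only [hM0, hrpos]) (by linarith only [hM54, hr_u, hu])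
            (by linarith only [hp])
        rwa [mul_rpow (by norm_num : (0:ℝ) ≤ 4) hu.le, ← hmudef] at h6
      have h7 : p * (mu * u^(p-1)) * r ≤ G/2 := by
        have h8 := hr2
        rw [le_div_iff₀ hden] at h8
        linarith only [h8]
      have h9 : p * (M+r)^(p-1) * r ≤ p * (mu * u^(p-1)) * r :=
        mul_le_mul_of_nonneg_right (mul_le_mul_of_nonneg_left h5 hp0.le) hrpos.le
      have h10 : y (Fin.last k) ≤ M^p + G/2 := by linarith only [hy, h3, h4, h9, h7]
      have h11 : G/2 ≤ m (Fin.last k) - y (Fin.last k) := by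
        rw [hmlast]
        linarith only [h10, hGdef]
      calc G/2 ≤ |m (Fin.last k) - y (Fin.last k)| := h11.trans (le_abs_self _)
        _ ≤ dist m y := last_le_dist k m y
  -- Final assembly
  have hδH0 : 0 ≤ Metric.infDist m (paraTangentHalf k p w)ᶜ := Metric.infDist_nonneg
  set dH := Metric.infDist m (paraTangentHalf k p w)ᶜ with hdHdef
  clear_value dH
  have hH_N : dH ≤ N := by nlinarith only [hHmain, hQ1, hδH0]
  have hH_P : dH * (p * u^(p-1)) ≤ N := by
    have h1 : dH * P ≤ N := by
      linarith only [hHmain, mul_le_mul_of_nonneg_left hQP hδH0]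
    rwa [hPdef] at h1
  refine le_trans ?_ hUmain
  have hcmin1 : min (4*p/K) (p/(16 * lam * mu * K)) ≤ 4*p/K := min_le_left _ _
  have hcmin2 : min (4*p/K) (p/(16 * lam * mu * K)) ≤ p/(16 * lam * mu * K) :=
    min_le_right _ _
  have h20 : p * (u^(p-2) * d^2) ≤ 8 * lam * G := by
    have h21 := mul_le_mul_of_nonneg_left hGlow2 (by linarith only [hlampos] : (0:ℝ) ≤ 8*lam)
    have e6 : (8*lam) * ((p/8) * (u^(p-2)/lam) * d^2) = p * (u^(p-2) * d^2) := by
      field_simp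
    rw [e6] at h21
    linarith only [h21]
  have h22 : p * dH ≤ 8 * lam * K * G := by
    have h23 : p * dH ≤ p * N := mul_le_mul_of_nonneg_left hH_N hp0.le
    have h24 : p * N ≤ p * (K * u^(p-2) * d^2) := mul_le_mul_of_nonneg_left hNupper hp0.le
    have h26 : K * (p * (u^(p-2) * d^2)) ≤ K * (8 * lam * G) :=
      mul_le_mul_of_nonneg_left h20 hKpos.le
    linarith only [h23, h24, h26]
  rw [hrdef]
  refine le_min (le_min ?_ ?_) ?_
  · -- c dH ≤ u
    have hd2 : d^2 ≤ u^2/4 := by nlinarith only [hd0, hdu]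
    have h12 : dH * (p * u^(p-1)) ≤ K * u^(p-2) * d^2 := hH_P.trans hNupper
    have h13 : K * u^(p-2) * d^2 ≤ K * u^(p-2) * (u^2/4) :=
      mul_le_mul_of_nonneg_left hd2 (mul_pos hKpos hA0).le
    have e_Bu' : (K/4) * (u^(p-2) * u^2) = (K/4) * (u^(p-1) * u) := by rw [e_Bu]
    have h14 : dH * (p * u^(p-1)) ≤ (K/4) * (u^(p-1) * u) := by
      linarith only [h12, h13, e_Bu']
    have h15 : (4*p*dH) * u^(p-1) ≤ (K*u) * u^(p-1) := by linarith only [h14]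
    have h16 : 4*p*dH ≤ K*u := le_of_mul_le_mul_right h15 hB0
    calc min (4*p/K) (p/(16 * lam * mu * K)) * dH ≤ (4*p/K) * dH :=
          mul_le_mul_of_nonneg_right hcmin1 hδH0
      _ ≤ u := by
          rw [div_mul_eq_mul_div, div_le_iff₀ hKpos]
          linarith only [h16]
  · -- c dH ≤ G / (2 p mu u^{p-1})
    have h30 : dH * (p * u^(p-1)) * p ≤ K * (8 * lam * G) := by
      have h31 := mul_le_mul_of_nonneg_right (hH_P.trans hNupper) hp0.le
      have h34 := mul_le_mul_of_nonneg_left h20 hKpos.le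
      linarith only [h31, h34]
    calc min (4*p/K) (p/(16 * lam * mu * K)) * dH ≤ (p/(16 * lam * mu * K)) * dH :=
          mul_le_mul_of_nonneg_right hcmin2 hδH0
      _ ≤ G / (2 * p * mu * u^(p-1)) := by
          rw [div_mul_eq_mul_div, div_le_div_iff₀
            (mul_pos (mul_pos (mul_pos (by norm_num : (0:ℝ) < 16) hlampos) hmupos) hKpos)
            hden]
          linarith only [mul_le_mul_of_nonneg_left h30 (by linarith only [hmupos] : (0:ℝ) ≤ 2*mu)]
  · -- c dH ≤ G/2
    have h40 : 16*lam*K*G ≤ 16*lam*K*G*mu := by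
      have := mul_le_mul_of_nonneg_left hmu1
        (mul_pos (mul_pos (mul_pos (by norm_num : (0:ℝ) < 16) hlampos) hKpos) hGpos).le
      linarith only [this]
    calc min (4*p/K) (p/(16 * lam * mu * K)) * dH ≤ (p/(16 * lam * mu * K)) * dH :=
          mul_le_mul_of_nonneg_right hcmin2 hδH0
      _ ≤ G/2 := by
          rw [div_mul_eq_mul_div, div_le_div_iff₀
            (mul_pos (mul_pos (mul_pos (by norm_num : (0:ℝ) < 16) hlampos) hmupos) hKpos)
            (by norm_num : (0:ℝ) < 2)]
          linarith only [h22, h40]
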